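/- Let λ > 0, Γ > 0 with λΓ ≥ e^(2e), and let A : [0,∞) → ℕ be a counting function satisfying the constraint that for every k ≥ 1, the time of the k-th arrival T_k satisfies |T_k − k/λ| ≤ Γ·φ(k), where φ(k) = √(k·ln(ln k)) for k ≥ e^e and φ(k) = 1 otherwise, and A(t) = max{k : T_k ≤ t} (A(t) = 0 if no arrival by time t). Then for every t ≥ max(e^e/λ, 1/λ + 3λ²Γ²/λ), we have A(t) ≤ λt + 3λ²Γ²·φ(λt). -/

import Mathlib

/-! Write `c = λΓ`, `x = λt` and `m = A(t)`. Since `T m ≤ t`, the constraint gives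
`m ≤ x + c φ(m)`. If `m ≤ 2x`, then `φ(m) ≤ 2φ(x)`, so `m ≤ x + 2cφ(x)`. Otherwise `m ≤ 2cφ(m)`;
since `φ(m)² / m = log log m ≤ 2√2 m^(1/4)`, this forces `m³ ≤ 2¹⁴ c⁸`, hence `m ≤ 3√3 c³` once
`c ≥ 143` (guaranteed by `c ≥ e^(2e)`), and `3√3 c³ ≤ 3c² √x ≤ 3c² φ(x)` because `x ≥ 3c²`. -/

open Real

noncomputable def phi (x : ℝ) : ℝ :=
  if Real.exp (Real.exp 1) ≤ x then Real.sqrt (x * Real.log (Real.log x)) else 1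

lemma phi_nonneg (x : ℝ) : 0 ≤ phi x := by
  unfold phi
  split_ifs
  exacts [sqrt_nonneg _, zero_le_one]

lemma phi_of_exp_exp_le {x : ℝ} (hx : exp (exp 1) ≤ x) : phi x = √(x * log (log x)) :=
  if_pos hx

lemma one_le_log_log_of_exp_exp_le {x : ℝ} (hx : exp (exp 1) ≤ x) : 1 ≤ log (log x) := by
  have hx0 : 0 < x := (exp_pos _).trans_le hx
  have hlog : exp 1 ≤ log x := (le_log_iff_exp_le hx0).2 hx
  exact (le_log_iff_exp_le ((exp_pos 1).trans_le hlog)).2 hlog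

lemma sqrt_le_phi {x : ℝ} (hx : exp (exp 1) ≤ x) : √x ≤ phi x := by
  have hx0 : 0 ≤ x := (exp_pos _).le.trans hx
  rw [phi_of_exp_exp_le hx]
  exact sqrt_le_sqrt (le_mul_of_one_le_right hx0 (one_le_log_log_of_exp_exp_le hx))

lemma log_le_two_mul_sqrt {y : ℝ} (hy : 0 < y) : log y ≤ 2 * √y := by
  have h := log_le_sub_one_of_pos (sqrt_pos.2 hy)
  rw [log_sqrt hy.le] at h
  linarith

lemma log_log_le_two_mul_log_log {x y : ℝ} (hx : exp (exp 1) ≤ x) (hxy : x ≤ y)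
    (hyx : y ≤ x ^ 2) : log (log y) ≤ 2 * log (log x) := by
  have hx0 : 0 < x := (exp_pos _).trans_le hx
  have hlogx : 0 < log x := (exp_pos 1).trans_le ((le_log_iff_exp_le hx0).2 hx)
  have hlogy : log y ≤ 2 * log x := by
    simpa only [log_pow, Nat.cast_ofNat] using log_le_log (hx0.trans_le hxy) hyx
  have hlog2 : log 2 ≤ 1 := by linarith [log_le_sub_one_of_pos two_pos]
  calc log (log y) ≤ log (2 * log x) :=
        log_le_log (hlogx.trans_le (log_le_log hx0 hxy)) hlogy
    _ = log 2 + log (log x) := log_mul two_ne_zero hlogx.ne'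
    _ ≤ 2 * log (log x) := by linarith [one_le_log_log_of_exp_exp_le hx]

lemma phi_le_two_mul_phi {x y : ℝ} (hx : exp (exp 1) ≤ x) (hxy : x ≤ y) (hyx : y ≤ 2 * x) :
    phi y ≤ 2 * phi x := by
  have hx2 : 2 ≤ x := by linarith [add_one_le_exp 1, add_one_le_exp (exp 1)]
  have hL := log_log_le_two_mul_log_log hx hxy (by nlinarith)
  have hLy : 0 ≤ log (log y) := zero_le_one.trans (one_le_log_log_of_exp_exp_le (hx.trans hxy))
  rw [phi_of_exp_exp_le hx, phi_of_exp_exp_le (hx.trans hxy)]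
  calc √(y * log (log y)) ≤ √(2 ^ 2 * (x * log (log x))) := sqrt_le_sqrt (by nlinarith)
    _ = 2 * √(x * log (log x)) := by
        rw [sqrt_mul (by norm_num), sqrt_sq zero_le_two]

lemma pow_three_le_of_le_two_mul_phi {c m : ℝ} (hc : 0 ≤ c) (hm : exp (exp 1) ≤ m)
    (h : m ≤ 2 * c * phi m) : m ^ 3 ≤ 16384 * c ^ 8 := by
  have hm0 : 0 < m := (exp_pos _).trans_le hm
  have hlogm : 0 < log m := (exp_pos 1).trans_le ((le_log_iff_exp_le hm0).2 hm)
  set L := log (log m)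
  have hL : 0 ≤ L := zero_le_one.trans (one_le_log_log_of_exp_exp_le hm)
  rw [phi_of_exp_exp_le hm] at h
  have hsq : √(m * L) ^ 2 = m * L := sq_sqrt (by positivity)
  have hmL : m ≤ 4 * c ^ 2 * L := by
    have : m * m ≤ m * (4 * c ^ 2 * L) := by nlinarith [sqrt_nonneg (m * L)]
    exact le_of_mul_le_mul_left this hm0
  have hL2 : L ^ 2 ≤ 4 * log m := by
    have h2 := log_le_two_mul_sqrt hlogm
    nlinarith [sq_sqrt hlogm.le, sqrt_nonneg (log m)]
  have hm2 : m ^ 2 ≤ 128 * c ^ 4 * √m := by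
    have hlog := log_le_two_mul_sqrt hm0
    have : m ^ 2 ≤ 16 * c ^ 4 * L ^ 2 := by nlinarith
    nlinarith [pow_nonneg hc 4]
  have hm4 : m * m ^ 3 ≤ m * (16384 * c ^ 8) := by
    have := pow_le_pow_left₀ (sq_nonneg m) hm2 2
    nlinarith [sq_sqrt hm0.le]
  exact le_of_mul_le_mul_left hm4 hm0

lemma le_of_le_two_mul_phi {c m : ℝ} (hc : 143 ≤ c) (hm : exp (exp 1) ≤ m)
    (h : m ≤ 2 * c * phi m) : m ≤ 3 * √3 * c ^ 3 := by
  have hc0 : 0 ≤ c := by linarith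
  have hm3 := pow_three_le_of_le_two_mul_phi hc0 hm h
  have hm0 : 0 ≤ m := (exp_pos _).le.trans hm
  have h3 : (3 * √3 * c ^ 3) ^ 2 = 27 * c ^ 6 := by
    rw [mul_pow, mul_pow, sq_sqrt zero_le_three]; ring
  rw [← pow_le_pow_iff_left₀ hm0 (by positivity) two_ne_zero, h3,
    ← pow_le_pow_iff_left₀ (sq_nonneg m) (by positivity) three_ne_zero]
  calc (m ^ 2) ^ 3 = (m ^ 3) ^ 2 := by ring
    _ ≤ (16384 * c ^ 8) ^ 2 := pow_le_pow_left₀ (by positivity) hm3 2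
    _ = c ^ 16 * 268435456 := by ring
    _ ≤ c ^ 16 * (19683 * c ^ 2) := by gcongr; nlinarith
    _ = (27 * c ^ 6) ^ 3 := by ring

lemma le_add_mul_phi_of_le_add_mul_phi {c x m : ℝ} (hc : 143 ≤ c) (hx : exp (exp 1) ≤ x)
    (hcx : 3 * c ^ 2 ≤ x) (hm : m ≤ x + c * phi m) : m ≤ x + 3 * c ^ 2 * phi x := by
  have hφx := phi_nonneg x
  have hx0 : 0 ≤ x := (exp_pos _).le.trans hx
  rcases le_or_gt m x with hmx | hmx
  · nlinarith
  rcases le_or_gt m (2 * x) with hm2x | hm2x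
  · have hφ := phi_le_two_mul_phi hx hmx.le hm2x
    nlinarith
  · have hbig := le_of_le_two_mul_phi hc (hx.trans hmx.le) (by nlinarith)
    have hcφ : √3 * c ≤ phi x :=
      (le_sqrt (by positivity) hx0).2 (by rw [mul_pow, sq_sqrt zero_le_three]; exact hcx)
        |>.trans (sqrt_le_phi hx)
    nlinarith

lemma cast_le_mul_add_mul_phi {lam Γ t : ℝ} (hlam : 0 < lam) {T : ℕ → ℝ}
    (hLIL : ∀ k : ℕ, 1 ≤ k → |T k - k / lam| ≤ Γ * phi k) {k : ℕ} (hk : 1 ≤ k)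
    (hTk : T k ≤ t) : (k : ℝ) ≤ lam * t + lam * Γ * phi k := by
  have h := (abs_le.1 (hLIL k hk)).1
  have : (k : ℝ) / lam ≤ t + Γ * phi k := by linarith
  rw [div_le_iff₀ hlam] at this
  linarith

lemma le_exp_two_mul_exp_one : (143 : ℝ) ≤ exp (2 * exp 1) := by
  have he : (2.7 : ℝ) ≤ exp 1 := by linarith [exp_one_gt_d9]
  calc (143 : ℝ) ≤ 2.7 ^ 5 := by norm_num
    _ ≤ exp 1 ^ 5 := by gcongr
    _ = exp 5 := by rw [← exp_nat_mul]; norm_num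
    _ ≤ exp (2 * exp 1) := exp_le_exp.2 (by linarith)

theorem stmt11_general (lam Γ : ℝ) (hlam : 0 < lam)
    (hlamΓ : Real.exp (2 * Real.exp 1) ≤ lam * Γ)
    (T : ℕ → ℝ)
    (hLIL : ∀ k : ℕ, 1 ≤ k → |T k - k / lam| ≤ Γ * phi k)
    (A : ℝ → ℕ)
    (hA : ∀ t : ℝ, 0 ≤ t → ∀ k : ℕ, 1 ≤ k → (k ≤ A t ↔ T k ≤ t)) :
    ∀ t : ℝ,
      max (Real.exp (Real.exp 1) / lam) (1 / lam + 3 * lam ^ 2 * Γ ^ 2 / lam) ≤ t →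
        (A t : ℝ) ≤ lam * t + 3 * lam ^ 2 * Γ ^ 2 * phi (lam * t) := by
  intro t ht
  rw [max_le_iff, div_le_iff₀' hlam, ← add_div, div_le_iff₀' hlam] at ht
  obtain ⟨hx, hcx⟩ := ht
  have hc : 143 ≤ lam * Γ := le_exp_two_mul_exp_one.trans hlamΓ
  have ht0 : 0 ≤ t := nonneg_of_mul_nonneg_right ((exp_pos _).le.trans hx) hlam
  rw [show 3 * lam ^ 2 * Γ ^ 2 = 3 * (lam * Γ) ^ 2 by ring] at hcx ⊢
  refine le_add_mul_phi_of_le_add_mul_phi hc hx (by linarith) ?_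
  rcases Nat.eq_zero_or_pos (A t) with h0 | hpos
  · rw [h0, Nat.cast_zero]
    positivity [phi_nonneg (0 : ℝ)]
  · exact cast_le_mul_add_mul_phi hlam hLIL hpos ((hA t ht0 _ hpos).1 le_rfl)

/-- Lemma 5.1: if the arrival epochs satisfy the LIL-type constraint
|T k - k/λ| ≤ Γ φ(k), then the counting process A(t) = max{k : T k ≤ t} satisfies
A(t) ≤ λ t + 3 λ² Γ² φ(λ t) for all t ≥ max(e^e/λ, 1/λ + 3 λ² Γ²/λ). -/
theorem stmt11 (lam Γ : ℝ) (hlam : 0 < lam) (hΓ : 0 < Γ)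
    (hlamΓ : Real.exp (2 * Real.exp 1) ≤ lam * Γ)
    (T : ℕ → ℝ) (hT : Monotone T)
    (hLIL : ∀ k : ℕ, 1 ≤ k → |T k - k / lam| ≤ Γ * phi k)
    (A : ℝ → ℕ)
    (hA : ∀ t : ℝ, 0 ≤ t → ∀ k : ℕ, 1 ≤ k → (k ≤ A t ↔ T k ≤ t)) :
    ∀ t : ℝ,
      max (Real.exp (Real.exp 1) / lam) (1 / lam + 3 * lam ^ 2 * Γ ^ 2 / lam) ≤ t →
        (A t : ℝ) ≤ lam * t + 3 * lam ^ 2 * Γ ^ 2 * phi (lam * t) :=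
  stmt11_general lam Γ hlam hlamΓ T hLIL A hA
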